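/- arXiv:1306.1174 — 3 statements merged into one kernel-verified Lean document; each statement's English description precedes it below -/
import Mathlib

section
/- Let T be a complete strongly minimal theory with infinite models and let r_0 be the unique complete 1-type over ∅ all of whose formulas have infinitely many solutions in every model of T. Then r_0 is isolated (principal) if and only if S^1_T(∅) is finite. -/
/-!
If `θ` isolates `r₀`, then `θ ∈ r₀`, so by strong minimality `¬θ` has only finitely many
solutions in every model. Every other complete type contains `¬θ`; a formula of the type with a
minimal (finite) solution set isolates it, so, `T` being complete, it is realized in any fixed
model `M` among the finitely many solutions of `¬θ` in `M`. Conversely, if there are only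
finitely many types, `r₀` is isolated by a conjunction of formulas of `r₀`, one refuting each
other type.
-/

open FirstOrder FirstOrder.Language Set

universe u v

variable {L : FirstOrder.Language.{u, v}}

/-- `p` is a complete 1-type of `T` over `∅`: a maximal `T`-consistent (i.e. realized in some
model of `T`) set of `L`-formulas in one free variable without parameters. -/
def IsCompleteOneType (T : L.Theory) (p : Set (L.Formula (Fin 1))) : Prop :=
  (∃ (M : Theory.ModelType.{u, v, max u v} T) (b : M), ∀ φ ∈ p, φ.Realize ![b]) ∧
    ∀ φ : L.Formula (Fin 1), φ ∈ p ∨ φ.not ∈ p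

/-- `b` realizes the 1-type `p`: `b` satisfies every formula of `p`. -/
def RealizesOneType (L : FirstOrder.Language.{u, v}) {M : Type w} [L.Structure M]
    (p : Set (L.Formula (Fin 1))) (b : M) : Prop :=
  ∀ φ ∈ p, φ.Realize ![b]

/-- `T` is strongly minimal: in every model `M` of `T`, for every formula `φ(x, ȳ)` and every
tuple `ā` of parameters from `M`, the set `{b ∈ M : M ⊨ φ(b, ā)}` is finite or cofinite. -/
def IsStronglyMinimal (T : L.Theory) : Prop :=
  ∀ (M : Theory.ModelType.{u, v, max u v} T) (n : ℕ)
    (φ : L.Formula (Fin 1 ⊕ Fin n)) (a : Fin n → M),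
    {b : M | φ.Realize (Sum.elim ![b] a)}.Finite ∨
      {b : M | ¬ φ.Realize (Sum.elim ![b] a)}.Finite

/-- A 1-type `q` is isolated (principal): there is a formula `θ(x)` consistent with `T`
such that `T ⊨ ∀x (θ(x) → ψ(x))` for every `ψ ∈ q`. -/
def IsIsolatedType (T : L.Theory) (q : Set (L.Formula (Fin 1))) : Prop :=
  ∃ θ : L.Formula (Fin 1),
    (∃ (M : Theory.ModelType.{u, v, max u v} T) (b : M), θ.Realize ![b]) ∧
      ∀ ψ ∈ q, ∀ (M : Theory.ModelType.{u, v, max u v} T) (b : M),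
        θ.Realize ![b] → ψ.Realize ![b]

/-- `b` is semi-isolated over `a`: there is a parameter-free formula `φ(x, y)` with
`M ⊨ φ(a, b)` such that every `b'` with `M ⊨ φ(a, b')` realizes the complete type of `b`
over `∅`. -/
def SemiIsolatedOver (L : FirstOrder.Language.{u, v}) {M : Type w} [L.Structure M]
    (a b : M) : Prop :=
  ∃ φ : L.Formula (Fin 2), φ.Realize ![a, b] ∧
    ∀ b' : M, φ.Realize ![a, b'] →
      ∀ ψ : L.Formula (Fin 1), ψ.Realize ![b] → ψ.Realize ![b']

namespace FirstOrder.Language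

variable {M : Type*} [L.Structure M]

theorem realize_iAlls_relabel_inr {φ : L.Formula (Fin 1)} :
    M ⊨ (φ.relabel (Sum.inr : Fin 1 → Empty ⊕ Fin 1)).iAlls (Fin 1) ↔
      ∀ b : M, φ.Realize ![b] := by
  simp only [Sentence.Realize, Formula.realize_iAlls, Formula.realize_relabel, Function.comp_def,
    Sum.elim_inr]
  refine ⟨fun h b => h ![b], fun h i => ?_⟩
  convert h (i 0) using 2 with j
  fin_cases j
  rfl

namespace Theory.IsComplete

variable {T : L.Theory}

theorem forall_realize_of_forall_realize (hT : T.IsComplete)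
    {M N : Theory.ModelType.{u, v, max u v} T} {φ : L.Formula (Fin 1)}
    (h : ∀ b : M, φ.Realize ![b]) : ∀ b : N, φ.Realize ![b] := by
  rw [← realize_iAlls_relabel_inr, hT.realize_sentence_iff] at h ⊢
  exact h

theorem exists_realize_of_exists_realize (hT : T.IsComplete)
    {M : Theory.ModelType.{u, v, max u v} T} {φ : L.Formula (Fin 1)} (h : ∃ b : M, φ.Realize ![b])
    (N : Theory.ModelType.{u, v, max u v} T) : ∃ b : N, φ.Realize ![b] := by
  by_contra! hN
  obtain ⟨b, hb⟩ := h
  exact Formula.realize_not.1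
    (hT.forall_realize_of_forall_realize (φ := φ.not) (fun c => Formula.realize_not.2 (hN c)) b)
    hb

end Theory.IsComplete

theorem exists_formula_isolating_of_finite {χ : L.Formula (Fin 1)} {b : M}
    (hχb : χ.Realize ![b]) (hχ : {c : M | χ.Realize ![c]}.Finite) :
    ∃ σ : L.Formula (Fin 1), σ.Realize ![b] ∧
      ∀ c : M, σ.Realize ![c] → ∀ ψ : L.Formula (Fin 1), ψ.Realize ![b] → ψ.Realize ![c] := by
  let sols (σ : L.Formula (Fin 1)) : Set M := {c | σ.Realize ![c]}
  let S := {σ : L.Formula (Fin 1) | σ.Realize ![b] ∧ sols σ ⊆ sols χ}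
  have hS : (sols '' S).Finite :=
    hχ.finite_subsets.subset (Set.image_subset_iff.2 fun σ hσ => hσ.2)
  obtain ⟨σ, ⟨hσb, hσχ⟩, hmin⟩ :=
    Set.Finite.exists_minimalFor' sols S hS ⟨χ, hχb, subset_rfl⟩
  refine ⟨σ, hσb, fun c hc ψ hψ => ?_⟩
  have hsub : sols (σ ⊓ ψ) ⊆ sols σ := fun x hx => (Formula.realize_inf.1 hx).1
  have hσψ : σ ⊓ ψ ∈ S := ⟨Formula.realize_inf.2 ⟨hσb, hψ⟩, hsub.trans hσχ⟩
  exact (Formula.realize_inf.1 (hmin hσψ hsub hc)).2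

end FirstOrder.Language

section OneTypes

variable {T : L.Theory}

theorem setOf_realize_eq_of_realizesOneType {M : Type*} [L.Structure M]
    {p : Set (L.Formula (Fin 1))} (hp : ∀ φ : L.Formula (Fin 1), φ ∈ p ∨ φ.not ∈ p) {b : M}
    (hb : RealizesOneType L p b) : {φ : L.Formula (Fin 1) | φ.Realize ![b]} = p := by
  ext φ
  exact ⟨fun hφ => (hp φ).resolve_right fun hnot => Formula.realize_not.1 (hb _ hnot) hφ, hb φ⟩

theorem isCompleteOneType_setOf_realize (M : Theory.ModelType.{u, v, max u v} T) (b : M) :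
    IsCompleteOneType T {φ : L.Formula (Fin 1) | φ.Realize ![b]} :=
  ⟨⟨M, b, fun _ h => h⟩, fun φ => (em (φ.Realize ![b])).imp id Formula.realize_not.2⟩

theorem IsCompleteOneType.exists_mem_and_not_mem_of_ne {p q : Set (L.Formula (Fin 1))}
    (hq : IsCompleteOneType T q) (hp : ∀ φ : L.Formula (Fin 1), φ ∈ p ∨ φ.not ∈ p)
    (hne : q ≠ p) : ∃ φ ∈ p, φ.not ∈ q := by
  by_contra! h
  obtain ⟨⟨N, b, hb⟩, hq⟩ := hq
  have hbp : RealizesOneType L p b := fun φ hφ => hb φ ((hq φ).resolve_right (h φ hφ))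
  exact hne ((setOf_realize_eq_of_realizesOneType hq hb).symm.trans
    (setOf_realize_eq_of_realizesOneType hp hbp))

theorem IsCompleteOneType.exists_realizesOneType_of_finite (hT : T.IsComplete)
    {p : Set (L.Formula (Fin 1))} (hp : IsCompleteOneType T p) {χ : L.Formula (Fin 1)}
    (hχp : χ ∈ p)
    (hχ : ∀ N : Theory.ModelType.{u, v, max u v} T, {c : N | χ.Realize ![c]}.Finite)
    (M : Theory.ModelType.{u, v, max u v} T) : ∃ c : M, RealizesOneType L p c := by
  obtain ⟨⟨N, b, hb⟩, -⟩ := hp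
  obtain ⟨σ, hσb, hσ⟩ := exists_formula_isolating_of_finite (hb χ hχp) (hχ N)
  obtain ⟨c, hc⟩ := hT.exists_realize_of_exists_realize ⟨b, hσb⟩ M
  exact ⟨c, fun ψ hψ => hT.forall_realize_of_forall_realize (φ := σ.imp ψ)
    (fun d hd => hσ d hd ψ (hb ψ hψ)) c hc⟩

theorem finite_setOf_isCompleteOneType_mem (hT : T.IsComplete) {χ : L.Formula (Fin 1)}
    (hχ : ∀ N : Theory.ModelType.{u, v, max u v} T, {c : N | χ.Realize ![c]}.Finite)
    (M : Theory.ModelType.{u, v, max u v} T) :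
    {p : Set (L.Formula (Fin 1)) | IsCompleteOneType T p ∧ χ ∈ p}.Finite := by
  refine ((hχ M).image fun c => {φ : L.Formula (Fin 1) | φ.Realize ![c]}).subset ?_
  rintro p ⟨hp, hχp⟩
  obtain ⟨c, hc⟩ := hp.exists_realizesOneType_of_finite hT hχp hχ M
  exact ⟨c, hc χ hχp, setOf_realize_eq_of_realizesOneType hp.2 hc⟩

theorem IsStronglyMinimal.finite_setOf_not_realize (hsm : IsStronglyMinimal T)
    {M : Theory.ModelType.{u, v, max u v} T} {θ : L.Formula (Fin 1)}
    (hθ : {b : M | θ.Realize ![b]}.Infinite) : {b : M | θ.not.Realize ![b]}.Finite := by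
  have hrel (b : M) : (θ.relabel (Sum.inl : Fin 1 → Fin 1 ⊕ Fin 0)).Realize
      (Sum.elim ![b] finZeroElim) ↔ θ.Realize ![b] := by
    rw [Formula.realize_relabel, Sum.elim_comp_inl]
  have h := hsm M 0 (θ.relabel Sum.inl) finZeroElim
  simp only [hrel] at h
  simpa only [Formula.realize_not] using h.resolve_left hθ

theorem isIsolatedType_of_finite {p : Set (L.Formula (Fin 1))} (hp : IsCompleteOneType T p)
    (hfin : {q : Set (L.Formula (Fin 1)) | IsCompleteOneType T q}.Finite) :
    IsIsolatedType T p := by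
  let Q := {q : Set (L.Formula (Fin 1)) | IsCompleteOneType T q ∧ q ≠ p}
  have : Finite Q := (hfin.subset fun _ hq => hq.1).to_subtype
  choose φ hφp hφq using fun q : Q => q.2.1.exists_mem_and_not_mem_of_ne hp.2 q.2.2
  obtain ⟨M, b, hb⟩ := hp.1
  refine ⟨Formula.iInf φ, ⟨M, b, Formula.realize_iInf.2 fun q => hb _ (hφp q)⟩,
    fun ψ hψ N c hc => ?_⟩
  have htp : {φ : L.Formula (Fin 1) | φ.Realize ![c]} = p := by
    by_contra hne
    exact Formula.realize_not.1 (hφq ⟨_, isCompleteOneType_setOf_realize N c, hne⟩)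
      (Formula.realize_iInf.1 hc _)
  rw [← htp] at hψ
  exact hψ

theorem IsIsolatedType.finite_setOf_isCompleteOneType (hT : T.IsComplete)
    (hsm : IsStronglyMinimal T) {r : Set (L.Formula (Fin 1))} (hr : IsCompleteOneType T r)
    (hrinf : ∀ φ ∈ r, ∀ M : Theory.ModelType.{u, v, max u v} T,
      {b : M | φ.Realize ![b]}.Infinite)
    (hiso : IsIsolatedType T r) :
    {p : Set (L.Formula (Fin 1)) | IsCompleteOneType T p}.Finite := by
  obtain ⟨θ, ⟨M, b, hb⟩, hθ⟩ := hiso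
  have hθr : θ ∈ r := (hr.2 θ).resolve_right fun h => Formula.realize_not.1 (hθ _ h M b hb) hb
  have hnotθ (N : Theory.ModelType.{u, v, max u v} T) : {c : N | θ.not.Realize ![c]}.Finite :=
    hsm.finite_setOf_not_realize (hrinf θ hθr N)
  refine ((finite_setOf_isCompleteOneType_mem hT hnotθ M).insert r).subset fun p hp => ?_
  refine (hp.2 θ).imp (fun hθp => ?_) fun h => ⟨hp, h⟩
  obtain ⟨N, c, hc⟩ := hp.1
  rw [← setOf_realize_eq_of_realizesOneType hp.2 hc,
    ← setOf_realize_eq_of_realizesOneType hr.2 fun ψ hψ => hθ ψ hψ N c (hc θ hθp)]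

end OneTypes

theorem statement4_general (T : L.Theory) (hcomplete : T.IsComplete)
    (hsm : IsStronglyMinimal T)
    (r0 : Set (L.Formula (Fin 1))) (hr0 : IsCompleteOneType T r0)
    (hr0inf : ∀ φ ∈ r0, ∀ M : Theory.ModelType.{u, v, max u v} T,
      {b : M | φ.Realize ![b]}.Infinite) :
    IsIsolatedType T r0 ↔
      {p : Set (L.Formula (Fin 1)) | IsCompleteOneType T p}.Finite :=
  ⟨IsIsolatedType.finite_setOf_isCompleteOneType hcomplete hsm hr0 hr0inf,
    isIsolatedType_of_finite hr0⟩

/-- In a complete strongly minimal theory, `r₀` is isolated iff `S¹_T(∅)` is finite. -/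
theorem statement4 (T : L.Theory) (hcomplete : T.IsComplete)
    (hinf : ∀ M : Theory.ModelType.{u, v, max u v} T, Infinite M)
    (hsm : IsStronglyMinimal T)
    (r0 : Set (L.Formula (Fin 1))) (hr0 : IsCompleteOneType T r0)
    (hr0inf : ∀ φ ∈ r0, ∀ M : Theory.ModelType.{u, v, max u v} T,
      {b : M | φ.Realize ![b]}.Infinite) :
    IsIsolatedType T r0 ↔
      {p : Set (L.Formula (Fin 1)) | IsCompleteOneType T p}.Finite :=
  statement4_general T hcomplete hsm r0 hr0 hr0inf
end

section
/- Let T be a complete strongly minimal theory with infinite models such that S^1_T(∅) is infinite, and let r_0 be the unique complete 1-type over ∅ all of whose formulas have infinitely many solutions in every model of T (so r_0 is non-isolated). Let M be a model of T and a, b ∈ M with b realizing r_0. If b is semi-isolated over a, then a also realizes r_0. -/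
open FirstOrder FirstOrder.Language Set

universe u v

variable {L : FirstOrder.Language.{u, v}}

section Aux

variable {W : Type w}

def liftF (ρ : L.Formula (Fin 1)) : L.BoundedFormula Empty 1 :=
  BoundedFormula.relabel (fun _ => Sum.inr 0) ρ

def allSent (ρ : L.Formula (Fin 1)) : L.Sentence := ∀' (liftF ρ)
def exSent (ρ : L.Formula (Fin 1)) : L.Sentence := ∃' (liftF ρ)

lemma realize_allSent {M : Type w} [L.Structure M] (ρ : L.Formula (Fin 1)) :
    (allSent ρ).Realize M ↔ ∀ x : M, ρ.Realize ![x] := by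
  simp only [allSent, liftF, Sentence.Realize, Formula.Realize, BoundedFormula.realize_all,
    BoundedFormula.realize_relabel]
  refine forall_congr' fun x => iff_of_eq (congrArg₂ _ ?_ ?_)
  · funext i; fin_cases i; rfl
  · funext i; exact i.elim0

lemma realize_exSent {M : Type w} [L.Structure M] (ρ : L.Formula (Fin 1)) :
    (exSent ρ).Realize M ↔ ∃ x : M, ρ.Realize ![x] := by
  simp only [exSent, liftF, Sentence.Realize, Formula.Realize, BoundedFormula.realize_ex,
    BoundedFormula.realize_relabel]
  refine exists_congr fun x => iff_of_eq (congrArg₂ _ ?_ ?_)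
  · funext i; fin_cases i; rfl
  · funext i; exact i.elim0

def liftY (χ : L.Formula (Fin 1)) : L.BoundedFormula (Fin 1) 1 :=
  BoundedFormula.relabel (fun _ => Sum.inr 0) χ

def liftYX (φ : L.Formula (Fin 2)) : L.BoundedFormula (Fin 1) 1 :=
  BoundedFormula.relabel ![Sum.inr 0, Sum.inl 0] φ

def liftXY (φ : L.Formula (Fin 2)) : L.BoundedFormula (Fin 1) 1 :=
  BoundedFormula.relabel ![Sum.inl 0, Sum.inr 0] φ

/-- θ(x) := ∃ y, χ(y) ∧ φ(y, x) -/
def thetaF (χ : L.Formula (Fin 1)) (φ : L.Formula (Fin 2)) : L.Formula (Fin 1) :=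
  ∃' (liftY χ ⊓ liftYX φ)

/-- σ(y) := ∀ x, φ(y, x) → ψ(x) -/
def sigmaF (φ : L.Formula (Fin 2)) (ψ : L.Formula (Fin 1)) : L.Formula (Fin 1) :=
  ∀' (liftXY φ ⟹ liftY ψ)

lemma realize_thetaF {M : Type w} [L.Structure M] (χ : L.Formula (Fin 1))
    (φ : L.Formula (Fin 2)) (c : M) :
    (thetaF χ φ).Realize ![c] ↔ ∃ y : M, χ.Realize ![y] ∧ φ.Realize ![y, c] := by
  simp only [thetaF, liftY, liftYX, Formula.Realize, BoundedFormula.realize_ex,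
    BoundedFormula.realize_inf, BoundedFormula.realize_relabel]
  refine exists_congr fun y => and_congr (iff_of_eq (congrArg₂ _ ?_ ?_))
    (iff_of_eq (congrArg₂ _ ?_ ?_))
  · funext i; fin_cases i; simp [Fin.snoc]
  · funext i; exact i.elim0
  · funext i; fin_cases i <;> simp [Fin.snoc]
  · funext i; exact i.elim0

lemma realize_sigmaF {M : Type w} [L.Structure M] (φ : L.Formula (Fin 2))
    (ψ : L.Formula (Fin 1)) (y : M) :
    (sigmaF φ ψ).Realize ![y] ↔ ∀ x : M, φ.Realize ![y, x] → ψ.Realize ![x] := by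
  simp only [sigmaF, liftY, liftXY, Formula.Realize, BoundedFormula.realize_all,
    BoundedFormula.realize_imp, BoundedFormula.realize_relabel]
  refine forall_congr' fun x => imp_congr (iff_of_eq (congrArg₂ _ ?_ ?_))
    (iff_of_eq (congrArg₂ _ ?_ ?_))
  · funext i; fin_cases i <;> simp [Fin.snoc]
  · funext i; exact i.elim0
  · funext i; fin_cases i; simp [Fin.snoc]
  · funext i; exact i.elim0

lemma transferSent {T : L.Theory} (hcomplete : T.IsComplete)
    (M : Theory.ModelType.{u, v, max u v} T) (σ : L.Sentence) (hσ : M ⊨ σ)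
    (N : Theory.ModelType.{u, v, max u v} T) : N ⊨ σ := by
  rcases hcomplete.2 σ with h | h
  · exact Theory.models_sentence_iff.mp h N
  · exact absurd hσ (by simpa using Theory.models_sentence_iff.mp h M)

lemma notSet_finite {T : L.Theory} (hsm : IsStronglyMinimal T)
    (N : Theory.ModelType.{u, v, max u v} T) (ρ : L.Formula (Fin 1))
    (h : {x : N | ρ.Realize ![x]}.Infinite) :
    {x : N | ρ.not.Realize ![x]}.Finite := by
  have key : ∀ x : N, (ρ.relabel (Sum.inl : Fin 1 → Fin 1 ⊕ Fin 0)).Realize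
      (Sum.elim ![x] Fin.elim0) ↔ ρ.Realize ![x] := by
    intro x
    rw [Formula.realize_relabel, Sum.elim_comp_inl]
  rcases hsm N 0 (ρ.relabel Sum.inl) Fin.elim0 with hfin | hfin
  · exact absurd (hfin.subset fun x hx => (key x).mpr hx) h
  · exact hfin.subset fun x hx => fun hr => by
      have : ρ.Realize ![x] := (key x).mp hr
      exact (Formula.realize_not.mp hx) this

lemma key_isolation {T : L.Theory} (hcomplete : T.IsComplete)
    (N : Theory.ModelType.{u, v, max u v} T) (c : N)
    (χ0 : L.Formula (Fin 1)) (hc : χ0.Realize ![c])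
    (hfin : {x : N | χ0.Realize ![x]}.Finite) :
    ∃ Φ : L.Formula (Fin 1), Φ.Realize ![c] ∧
      ∀ ψ : L.Formula (Fin 1), ψ.Realize ![c] →
        ∀ (N' : Theory.ModelType.{u, v, max u v} T) (d : N'),
          Φ.Realize ![d] → ψ.Realize ![d] := by
  classical
  let P : ℕ → Prop := fun n => ∃ χ : L.Formula (Fin 1), χ.Realize ![c] ∧
    {x : N | χ.Realize ![x]}.Finite ∧ {x : N | χ.Realize ![x]}.ncard = n
  have hP : ∃ n, P n := ⟨_, χ0, hc, hfin, rfl⟩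
  obtain ⟨χ, hχc, hχfin, hχcard⟩ := Nat.find_spec hP
  refine ⟨χ, hχc, fun ψ hψ N' d hd => ?_⟩
  have hsub : {x : N | (χ ⊓ ψ).Realize ![x]} ⊆ {x : N | χ.Realize ![x]} := fun x hx => by
    have : χ.Realize ![x] ∧ ψ.Realize ![x] := by simpa using hx
    exact this.1
  have h1 : {x : N | (χ ⊓ ψ).Realize ![x]}.Finite := hχfin.subset hsub
  have h2 : Nat.find hP ≤ {x : N | (χ ⊓ ψ).Realize ![x]}.ncard :=
    Nat.find_le ⟨χ ⊓ ψ, by simp [hχc, hψ], h1, rfl⟩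
  have heq : {x : N | (χ ⊓ ψ).Realize ![x]} = {x : N | χ.Realize ![x]} :=
    Set.eq_of_subset_of_ncard_le hsub (hχcard ▸ h2) hχfin
  have hNall : ∀ x : N, χ.Realize ![x] → ψ.Realize ![x] := by
    intro x hx
    have hmem : x ∈ {x : N | (χ ⊓ ψ).Realize ![x]} := heq ▸ hx
    have : χ.Realize ![x] ∧ ψ.Realize ![x] := by simpa using hmem
    exact this.2
  have hsent : (allSent (χ ⟹ ψ)).Realize N := by
    rw [realize_allSent]
    intro x
    rw [Formula.realize_imp]
    exact hNall x
  have := (realize_allSent (M := N') (χ ⟹ ψ)).mp (transferSent hcomplete N _ hsent N') d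
  exact (Formula.realize_imp.mp this) hd

end Aux

/-- If `S¹_T(∅)` is infinite and `b` realizes `r₀`, then semi-isolation of `b` over `a`
forces `a` to realize `r₀` as well. -/
theorem statement7 (T : L.Theory) (hcomplete : T.IsComplete)
    (hinf : ∀ M : Theory.ModelType.{u, v, max u v} T, Infinite M)
    (hsm : IsStronglyMinimal T)
    (hS1 : {p : Set (L.Formula (Fin 1)) | IsCompleteOneType T p}.Infinite)
    (r0 : Set (L.Formula (Fin 1))) (hr0 : IsCompleteOneType T r0)
    (hr0inf : ∀ φ ∈ r0, ∀ M : Theory.ModelType.{u, v, max u v} T,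
      {b : M | φ.Realize ![b]}.Infinite)
    (M : Theory.ModelType.{u, v, max u v} T) (a b : M)
    (hb : RealizesOneType L r0 b) (hab : SemiIsolatedOver L a b) :
    RealizesOneType L r0 a := by
  classical
  intro ψ0 hψ0
  by_contra hna
  obtain ⟨φ, hφab, hφsemi⟩ := hab
  -- ψ0.not is realized by a and has finitely many solutions in M
  have hfin0 : {x : M | ψ0.not.Realize ![x]}.Finite :=
    notSet_finite hsm M ψ0 (hr0inf ψ0 hψ0 M)
  obtain ⟨Φa, hΦa, hΦiso⟩ :=
    key_isolation hcomplete M a ψ0.not (Formula.realize_not.mpr hna) hfin0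
  set θ : L.Formula (Fin 1) := thetaF Φa φ with hθdef
  have hθb : θ.Realize ![b] := (realize_thetaF Φa φ b).mpr ⟨a, hΦa, hφab⟩
  -- every realization of θ in any model realizes r0
  have hθreal : ∀ (N : Theory.ModelType.{u, v, max u v} T) (c : N),
      θ.Realize ![c] → ∀ ψ ∈ r0, ψ.Realize ![c] := by
    intro N c hc ψ hψ
    obtain ⟨y, hy1, hy2⟩ := (realize_thetaF Φa φ c).mp hc
    have hσa : (sigmaF φ ψ).Realize ![a] :=
      (realize_sigmaF φ ψ a).mpr (fun x hx => hφsemi x hx ψ (hb ψ hψ))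
    exact (realize_sigmaF φ ψ y).mp (hΦiso (sigmaF φ ψ) hσa N y hy1) c hy2
  -- θ belongs to r0
  have hθr0 : θ ∈ r0 := by
    rcases hr0.2 θ with h | h
    · exact h
    · exact absurd hθb (Formula.realize_not.mp (hb θ.not h))
  -- the complement of θ is finite in every model
  have hDfin : ∀ N : Theory.ModelType.{u, v, max u v} T,
      {x : N | θ.not.Realize ![x]}.Finite := fun N =>
    notSet_finite hsm N θ (hr0inf θ hθr0 N)
  -- infinitely many types other than r0
  have hPinf : ({p : Set (L.Formula (Fin 1)) | IsCompleteOneType T p} \ {r0}).Infinite :=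
    hS1.diff (Set.finite_singleton r0)
  haveI : Infinite ↥({p : Set (L.Formula (Fin 1)) | IsCompleteOneType T p} \ {r0}) :=
    hPinf.to_subtype
  -- choose a realizer in M for each such type
  have hchoice : ∀ p : ↥({p : Set (L.Formula (Fin 1)) | IsCompleteOneType T p} \ {r0}),
      ∃ d : M, (∀ ψ ∈ p.1, ψ.Realize ![d]) ∧ θ.not ∈ p.1 := by
    rintro ⟨q, hq, hqne⟩
    simp only [Set.mem_setOf_eq] at hq
    obtain ⟨N, c, hcReal⟩ := hq.1
    have hqnot : θ.not ∈ q := by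
      rcases hq.2 θ with hθq | hθq
      · exfalso
        apply hqne
        have hcr0 : ∀ ψ ∈ r0, ψ.Realize ![c] := hθreal N c (hcReal θ hθq)
        have : q = r0 := Set.ext fun ψ => by
          constructor
          · intro hψq
            rcases hr0.2 ψ with h | h
            · exact h
            · exact absurd (hcReal ψ hψq) (Formula.realize_not.mp (hcr0 ψ.not h))
          · intro hψr
            rcases hq.2 ψ with h | h
            · exact h
            · exact absurd (hcr0 ψ hψr) (Formula.realize_not.mp (hcReal ψ.not h))
        simpa using this
      · exact hθq
    have hcfin : {x : N | θ.not.Realize ![x]}.Finite := hDfin N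
    obtain ⟨Φ, hΦc, hΦiso'⟩ :=
      key_isolation hcomplete N c θ.not (hcReal θ.not hqnot) hcfin
    have hex : (exSent Φ).Realize N := (realize_exSent Φ).mpr ⟨c, hΦc⟩
    obtain ⟨d, hd⟩ := (realize_exSent (M := M) Φ).mp (transferSent hcomplete N _ hex M)
    exact ⟨d, fun ψ hψ => hΦiso' ψ (hcReal ψ hψ) M d hd, hqnot⟩
  choose f hf using hchoice
  have hinj : Function.Injective f := by
    rintro ⟨p, hp, hpne⟩ ⟨q, hq, hqne⟩ hfeq
    have hpReal := (hf ⟨p, hp, hpne⟩).1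
    have hqReal := (hf ⟨q, hq, hqne⟩).1
    rw [hfeq] at hpReal
    refine Subtype.ext (Set.ext fun ψ => ?_)
    simp only [Set.mem_setOf_eq] at hp hq
    constructor
    · intro hψp
      rcases hq.2 ψ with h | h
      · exact h
      · exact absurd (hpReal ψ hψp) (Formula.realize_not.mp (hqReal ψ.not h))
    · intro hψq
      rcases hp.2 ψ with h | h
      · exact h
      · exact absurd (hqReal ψ hψq) (Formula.realize_not.mp (hpReal ψ.not h))
  have hmem : ∀ p, f p ∈ {x : M | θ.not.Realize ![x]} := fun p =>
    (hf p).1 θ.not (hf p).2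
  exact absurd (hDfin M) (Set.infinite_of_injective_forall_mem hinj hmem)
end

section
/- Let T be a complete strongly minimal theory with infinite models such that S^1_T(∅) is infinite, and let r_0 be the unique complete 1-type over ∅ all of whose formulas have infinitely many solutions in every model of T (so r_0 is non-isolated). Let M be a model of T and let a, b ∈ M both realize r_0. If b is semi-isolated over a, then a is semi-isolated over b; that is, the semi-isolation relation on the set of realizations of r_0 is symmetric. -/
open FirstOrder FirstOrder.Language Set

universe u v

variable {L : FirstOrder.Language.{u, v}}

/-!
If `φ(a, y)` semi-isolates `b` over `a`, every solution of `φ(a, y)` realizes `r₀`. Were the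
complement of `φ(a, M)` finite, every complete type `p ≠ r₀` would be realized in that finite
set: a formula of `p` that lies outside `r₀` and excludes each element of that set is
consistent, hence realized in `M`. So, as `S¹_T(∅)` is infinite, strong minimality makes
`φ(a, M)` finite: `b` is algebraic over `a`.

Algebraicity is symmetric here. With `k = |φ(a, M)|`, let `φ'(x, y)` say `φ(x, y)` and that `x`
has at most `k` solutions `y`. Then `φ'(a, b)` holds and `φ'(M, b)` is finite or cofinite. If it
were cofinite, with `m` exceptions, the formula "at most `m` elements `x` fail `φ'(x, y)`" would
hold of `b`, hence, as `b` realizes `r₀`, of infinitely many `y`; an `x` outside the finitely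
many exceptions of `k + 1` such `y` would then have more than `k` solutions.

Finally an algebraic element is semi-isolated: conjoin one formula excluding each of the finitely
many solutions whose type differs from that of the witness.
-/

theorem Set.natCast_le_encard_iff {α : Type*} {s : Set α} {k : ℕ} :
    (k : ℕ∞) ≤ s.encard ↔ ∃ f : Fin k → α, Function.Injective f ∧ ∀ i, f i ∈ s := by
  constructor
  · intro hk
    obtain ⟨t, hts, htk⟩ := Set.exists_subset_encard_eq hk
    have ht : t.Finite := Set.finite_of_encard_eq_coe htk
    have hcard : ht.toFinset.card = k := by
      rw [← Nat.cast_inj (R := ℕ∞), ← htk, ← Set.encard_coe_eq_coe_finsetCard, ht.coe_toFinset]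
    refine ⟨fun i => (ht.toFinset.equivFinOfCardEq hcard).symm i, ?_, fun i => hts ?_⟩
    · exact Subtype.val_injective.comp (ht.toFinset.equivFinOfCardEq hcard).symm.injective
    · exact ht.mem_toFinset.1 ((ht.toFinset.equivFinOfCardEq hcard).symm i).2
  · rintro ⟨f, hf, hfs⟩
    calc (k : ℕ∞) = ENat.card (Fin k) := by simp
      _ ≤ (range f).encard := hf.encard_range
      _ ≤ s.encard := Set.encard_le_encard (range_subset_iff.2 hfs)

namespace FirstOrder.Language.Formula

variable {M : Type*} [L.Structure M]

theorem realize_iExs_relabel_inr {α : Type*} [Finite α] (φ : L.Formula α) :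
    M ⊨ (φ.relabel Sum.inr).iExs α ↔ ∃ v : α → M, φ.Realize v := by
  simp only [Sentence.Realize, realize_iExs, realize_relabel, Sum.elim_comp_inr]

theorem realize_relabel_swap (φ : L.Formula (Fin 2)) (x y : M) :
    (φ.relabel ![1, 0]).Realize ![x, y] ↔ φ.Realize ![y, x] := by
  rw [realize_relabel]
  exact iff_of_eq (congrArg _ (by ext i; fin_cases i <;> rfl))

theorem realize_relabel_const (φ : L.Formula (Fin 1)) (i : Fin 2) (v : Fin 2 → M) :
    (φ.relabel fun _ => i).Realize v ↔ φ.Realize ![v i] := by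
  rw [realize_relabel]
  exact iff_of_eq (congrArg _ (by ext j; fin_cases j; rfl))

noncomputable def existsAtLeast (k : ℕ) (φ : L.Formula (Fin 2)) : L.Formula (Fin 1) :=
  iExs (Fin k) <|
    iInf (fun i : Fin k => φ.relabel ![Sum.inl 0, Sum.inr i]) ⊓
      iInf fun ij : {ij : Fin k × Fin k // ij.1 ≠ ij.2} =>
        (Term.equal (Term.var (Sum.inr ij.1.1)) (Term.var (Sum.inr ij.1.2))).not

theorem realize_existsAtLeast {k : ℕ} {φ : L.Formula (Fin 2)} {x : M} :
    (existsAtLeast k φ).Realize ![x] ↔ (k : ℕ∞) ≤ {y | φ.Realize ![x, y]}.encard := by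
  rw [Set.natCast_le_encard_iff, existsAtLeast, realize_iExs]
  refine exists_congr fun ys => ?_
  have hpair : ∀ i, Sum.elim ![x] ys ∘ ![Sum.inl 0, Sum.inr i] = ![x, ys i] := fun i => by
    ext j; fin_cases j <;> rfl
  simp only [realize_inf, realize_iInf, realize_relabel, hpair, realize_not, realize_equal,
    Term.realize_var, Sum.elim_inr, Set.mem_ofPred_eq]
  rw [and_comm]
  exact and_congr_left' ⟨fun h i j hij => not_not.1 fun hne => h ⟨(i, j), hne⟩ hij,
    fun h ij => h.ne ij.2⟩

end FirstOrder.Language.Formula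

theorem FirstOrder.Language.Theory.IsComplete.exists_realize {T : L.Theory} (hT : T.IsComplete)
    {α : Type*} [Finite α] (φ : L.Formula α) {M N : T.ModelType}
    (h : ∃ v : α → M, φ.Realize v) : ∃ v : α → N, φ.Realize v := by
  rw [← Formula.realize_iExs_relabel_inr] at h ⊢
  exact (hT.realize_sentence_iff _ N).2 ((hT.realize_sentence_iff _ M).1 h)

theorem FirstOrder.Language.Theory.IsComplete.exists_realize_one {T : L.Theory}
    (hT : T.IsComplete) (φ : L.Formula (Fin 1)) {M N : T.ModelType} {c : M}
    (h : φ.Realize ![c]) : ∃ x : N, φ.Realize ![x] := by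
  obtain ⟨v, hv⟩ := hT.exists_realize φ ⟨_, h⟩ (N := N)
  exact ⟨v 0, by rwa [show v = ![v 0] from funext fun i => by fin_cases i; rfl] at hv⟩

theorem IsCompleteOneType.eq_setOf_realize {T : L.Theory} {p : Set (L.Formula (Fin 1))}
    (hp : IsCompleteOneType T p) {M : Type*} [L.Structure M] {c : M}
    (hc : RealizesOneType L p c) : p = {φ | φ.Realize ![c]} := by
  ext φ
  refine ⟨hc φ, fun hφ => (hp.2 φ).resolve_right fun hnot => ?_⟩
  exact Formula.realize_not.1 (hc _ hnot) hφ

theorem IsCompleteOneType.exists_mem_and_not_mem_of_ne_s8 {T : L.Theory}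
    {p r : Set (L.Formula (Fin 1))} (hp : IsCompleteOneType T p) (hr : IsCompleteOneType T r)
    (hpr : p ≠ r) :
    ∃ ε ∈ p, ε.not ∈ r := by
  obtain ⟨_, c, hc⟩ := hp.1
  obtain ⟨_, d, hd⟩ := hr.1
  rw [hp.eq_setOf_realize hc, hr.eq_setOf_realize hd] at hpr ⊢
  by_contra! h
  refine hpr (Set.ext fun φ => ⟨fun hφ => ?_, fun hφ => ?_⟩)
  · exact not_not.1 fun hnot => h φ hφ (Formula.realize_not.2 hnot)
  · exact not_not.1 fun hnot => h φ.not (Formula.realize_not.2 hnot) (by simpa using hφ)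

section

variable {T : L.Theory} {r : Set (L.Formula (Fin 1))}

theorem exists_realizesOneType_of_finite_setOf_not_realizesOneType (hT : T.IsComplete)
    (hr : IsCompleteOneType T r) {p : Set (L.Formula (Fin 1))} (hp : IsCompleteOneType T p)
    (hpr : p ≠ r) (M : Theory.ModelType.{u, v, max u v} T)
    (hfin : {y : M | ¬ RealizesOneType L r y}.Finite) : ∃ x : M, RealizesOneType L p x := by
  by_contra! hnone
  have : Finite {y : M | ¬ RealizesOneType L r y} := hfin.to_subtype
  obtain ⟨ε, hεp, hεr⟩ := hp.exists_mem_and_not_mem_of_ne_s8 hr hpr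
  have hexclude : ∀ y : {y : M | ¬ RealizesOneType L r y}, ∃ ψ ∈ p, ¬ ψ.Realize ![(y : M)] :=
    fun y => by simpa [RealizesOneType] using hnone y
  choose ψ hψp hψy using hexclude
  obtain ⟨_, c, hc⟩ := hp.1
  obtain ⟨x, hx⟩ := hT.exists_realize_one (ε ⊓ Formula.iInf ψ) (N := M)
    (Formula.realize_inf.2 ⟨hc ε hεp, Formula.realize_iInf.2 fun y => hc _ (hψp y)⟩)
  rw [Formula.realize_inf, Formula.realize_iInf] at hx
  have hxr : RealizesOneType L r x := not_not.1 fun hxr => hψy ⟨x, hxr⟩ (hx.2 ⟨x, hxr⟩)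
  exact Formula.realize_not.1 (hxr _ hεr) hx.1

theorem infinite_setOf_not_realizesOneType (hT : T.IsComplete)
    (hS1 : {p : Set (L.Formula (Fin 1)) | IsCompleteOneType T p}.Infinite)
    (hr : IsCompleteOneType T r) (M : Theory.ModelType.{u, v, max u v} T) :
    {y : M | ¬ RealizesOneType L r y}.Infinite := by
  intro hfin
  refine hS1 (((hfin.image fun y => {φ | φ.Realize ![y]}).insert r).subset fun p hp => ?_)
  by_cases hpr : p = r
  · exact .inl hpr
  obtain ⟨x, hx⟩ :=
    exists_realizesOneType_of_finite_setOf_not_realizesOneType hT hr hp hpr M hfin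
  refine .inr ⟨x, fun hxr => hpr ?_, (hp.eq_setOf_realize hx).symm⟩
  rw [hp.eq_setOf_realize hx, hr.eq_setOf_realize hxr]

theorem IsStronglyMinimal.finite_or_finite_compl (hT : IsStronglyMinimal T)
    (M : Theory.ModelType.{u, v, max u v} T) (φ : L.Formula (Fin 2)) (c : M) :
    {x | φ.Realize ![x, c]}.Finite ∨ {x | ¬ φ.Realize ![x, c]}.Finite := by
  have hpair : ∀ x : M, Sum.elim ![x] ![c] ∘ ![Sum.inl 0, Sum.inr 0] = ![x, c] := fun x => by
    ext j; fin_cases j <;> rfl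
  simpa only [Formula.realize_relabel, hpair] using
    hT M 1 (φ.relabel ![Sum.inl 0, Sum.inr 0]) ![c]

/-- `b` is algebraic over `a`. -/
def IsAlgebraicOver (L : FirstOrder.Language.{u, v}) {M : Type*} [L.Structure M]
    (a b : M) : Prop :=
  ∃ φ : L.Formula (Fin 2), φ.Realize ![a, b] ∧ {y | φ.Realize ![a, y]}.Finite

theorem IsAlgebraicOver.semiIsolatedOver {M : Type*} [L.Structure M] {a b : M}
    (h : IsAlgebraicOver L a b) : SemiIsolatedOver L a b := by
  obtain ⟨φ, hφ, hfin⟩ := h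
  set bad := {y | φ.Realize ![a, y] ∧ ∃ ψ : L.Formula (Fin 1), ψ.Realize ![b] ∧ ¬ ψ.Realize ![y]}
  have : Finite bad := (hfin.subset fun _ hy => hy.1).to_subtype
  choose ψ hψb hψy using fun y : bad => y.2.2
  refine ⟨φ ⊓ (Formula.iInf ψ).relabel fun _ => 1, ?_, fun b' hb' θ hθ => ?_⟩
  · exact Formula.realize_inf.2
      ⟨hφ, (Formula.realize_relabel_const _ _ _).2 (Formula.realize_iInf.2 hψb)⟩
  · simp only [Formula.realize_inf, Formula.realize_relabel_const, Formula.realize_iInf] at hb'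
    exact not_not.1 fun hθb' => hψy ⟨b', hb'.1, θ, hθ, hθb'⟩ (hb'.2 _)

theorem exists_natCast_le_encard_of_finite_setOf_not_realize {M : Type*} [L.Structure M]
    {ψ : L.Formula (Fin 2)} {b : M}
    (hb : ∀ θ : L.Formula (Fin 1), θ.Realize ![b] → {y : M | θ.Realize ![y]}.Infinite)
    (hfin : {x | ¬ ψ.Realize ![x, b]}.Finite) (n : ℕ) :
    ∃ x : M, (n : ℕ∞) ≤ {y | ψ.Realize ![x, y]}.encard := by
  set m := {x | ¬ ψ.Realize ![x, b]}.ncard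
  set σ := (Formula.existsAtLeast (m + 1) (ψ.not.relabel ![1, 0])).not
  have hσ : ∀ y : M, σ.Realize ![y] ↔ {x | ¬ ψ.Realize ![x, y]}.encard < m + 1 := fun y => by
    simp only [σ, Formula.realize_not, Formula.realize_existsAtLeast,
      Formula.realize_relabel_swap, not_le, Nat.cast_succ]
  have hσinf : {y | σ.Realize ![y]}.Infinite :=
    hb σ ((hσ b).2 (by rw [← hfin.cast_ncard_eq]; exact_mod_cast m.lt_succ_self))
  have : Infinite M := Set.infinite_univ_iff.1 (hσinf.mono (subset_univ _))
  obtain ⟨t, htσ, htn⟩ := Set.exists_subset_encard_eq (hσinf.encard_eq.symm ▸ le_top)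
    (k := (n : ℕ∞))
  have hU : (⋃ y ∈ t, {x | ¬ ψ.Realize ![x, y]}).Finite :=
    (Set.finite_of_encard_eq_coe htn).biUnion fun y hy =>
      Set.encard_lt_top_iff.1 (((hσ y).1 (htσ hy)).trans (WithTop.coe_lt_top _))
  obtain ⟨x, hx⟩ := hU.infinite_compl.nonempty
  refine ⟨x, htn ▸ Set.encard_le_encard fun y hy => ?_⟩
  exact not_not.1 fun hxy => hx (Set.mem_biUnion hy hxy)

theorem IsAlgebraicOver.symm (hT : IsStronglyMinimal T) {M : Theory.ModelType.{u, v, max u v} T}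
    {a b : M} (hab : IsAlgebraicOver L a b)
    (hb : ∀ θ : L.Formula (Fin 1), θ.Realize ![b] → {y : M | θ.Realize ![y]}.Infinite) :
    IsAlgebraicOver L b a := by
  obtain ⟨φ, hφ, hfin⟩ := hab
  set k := {y | φ.Realize ![a, y]}.ncard
  set φ' := φ ⊓ ((Formula.existsAtLeast (k + 1) φ).relabel fun _ => 0).not
  have hφ' : ∀ x y : M, φ'.Realize ![x, y] ↔
      φ.Realize ![x, y] ∧ {y | φ.Realize ![x, y]}.encard < k + 1 := fun x y => by
    simp only [φ', Formula.realize_inf, Formula.realize_not, Formula.realize_relabel_const,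
      Matrix.cons_val_zero, Formula.realize_existsAtLeast, not_le, Nat.cast_succ]
  refine ⟨φ'.relabel ![1, 0], ?_, ?_⟩
  · rw [Formula.realize_relabel_swap, hφ', ← hfin.cast_ncard_eq]
    exact ⟨hφ, by exact_mod_cast k.lt_succ_self⟩
  simp only [Formula.realize_relabel_swap]
  refine (hT.finite_or_finite_compl M φ' b).resolve_right fun hcofin => ?_
  obtain ⟨x, hx⟩ := exists_natCast_le_encard_of_finite_setOf_not_realize hb hcofin (k + 1)
  obtain ⟨y, hy⟩ := Set.one_le_encard_iff_nonempty.1 ((by simp : (1 : ℕ∞) ≤ _).trans hx)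
  refine ((hφ' x y).1 hy).2.not_ge (hx.trans (Set.encard_le_encard fun z hz => ?_))
  exact ((hφ' x z).1 hz).1

theorem SemiIsolatedOver.isAlgebraicOver (hT : T.IsComplete) (hsm : IsStronglyMinimal T)
    (hS1 : {p : Set (L.Formula (Fin 1)) | IsCompleteOneType T p}.Infinite)
    (hr : IsCompleteOneType T r) {M : Theory.ModelType.{u, v, max u v} T} {a b : M}
    (hb : RealizesOneType L r b) (h : SemiIsolatedOver L a b) : IsAlgebraicOver L a b := by
  obtain ⟨φ, hφ, hφr⟩ := h
  have hrealize : ∀ y, φ.Realize ![a, y] → RealizesOneType L r y :=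
    fun y hy ψ hψ => hφr y hy ψ (hb ψ hψ)
  have hdichotomy := hsm.finite_or_finite_compl M (φ.relabel ![1, 0]) a
  simp only [Formula.realize_relabel_swap] at hdichotomy
  refine ⟨φ, hφ, hdichotomy.resolve_right fun hcofin => ?_⟩
  exact infinite_setOf_not_realizesOneType hT hS1 hr M
    (hcofin.subset fun y hy hφy => hy (hrealize y hφy))

end

theorem statement8_general (T : L.Theory) (hcomplete : T.IsComplete)
    (hsm : IsStronglyMinimal T)
    (hS1 : {p : Set (L.Formula (Fin 1)) | IsCompleteOneType T p}.Infinite)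
    (r0 : Set (L.Formula (Fin 1))) (hr0 : IsCompleteOneType T r0)
    (hr0inf : ∀ φ ∈ r0, ∀ M : Theory.ModelType.{u, v, max u v} T,
      {b : M | φ.Realize ![b]}.Infinite)
    (M : Theory.ModelType.{u, v, max u v} T) (a b : M)
    (hb : RealizesOneType L r0 b)
    (hab : SemiIsolatedOver L a b) :
    SemiIsolatedOver L b a := by
  have hb_nonalgebraic : ∀ θ : L.Formula (Fin 1), θ.Realize ![b] →
      {y : M | θ.Realize ![y]}.Infinite := fun θ hθ =>
    hr0inf θ (hr0.eq_setOf_realize hb ▸ hθ) M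
  exact ((hab.isAlgebraicOver hcomplete hsm hS1 hr0 hb).symm hsm hb_nonalgebraic).semiIsolatedOver

/-- If `S¹_T(∅)` is infinite, the semi-isolation relation on the set of realizations of `r₀`
is symmetric. -/
theorem statement8 (T : L.Theory) (hcomplete : T.IsComplete)
    (hinf : ∀ M : Theory.ModelType.{u, v, max u v} T, Infinite M)
    (hsm : IsStronglyMinimal T)
    (hS1 : {p : Set (L.Formula (Fin 1)) | IsCompleteOneType T p}.Infinite)
    (r0 : Set (L.Formula (Fin 1))) (hr0 : IsCompleteOneType T r0)
    (hr0inf : ∀ φ ∈ r0, ∀ M : Theory.ModelType.{u, v, max u v} T,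
      {b : M | φ.Realize ![b]}.Infinite)
    (M : Theory.ModelType.{u, v, max u v} T) (a b : M)
    (ha : RealizesOneType L r0 a) (hb : RealizesOneType L r0 b)
    (hab : SemiIsolatedOver L a b) :
    SemiIsolatedOver L b a :=
  statement8_general T hcomplete hsm hS1 r0 hr0 hr0inf M a b hb hab
end
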